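/- Let S be a finite set of 'spots' with |S| = N, let I be a finite index set, and for each i ∈ I let ρ_i : S → P_i be a map into a finite set P_i of 'partial spots', with Σ_i |P_i| = M. Suppose N > p·M + q^{|I|} where p = ⌈log₂ q⌉ and q ≥ 2. Then there exists a coloring C : S → {0,1} such that for every family of colorings D_i : P_i → [q] (i ∈ I), there exist s, t ∈ S with D_i(ρ_i(s)) = D_i(ρ_i(t)) for all i ∈ I, but C(s) ≠ C(t). -/
import Mathlib


/-- Counting claim: with `N` spots, `M` partial spots in total, `q ≥ 2` and
`p = ⌈log₂ q⌉`, if `N > p·M + q^{|I|}` then there is a `2`-coloring `C` of the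
spots such that for every family of `q`-colorings `D_i` of the partial spots
there are spots `s, t` agreeing on all projected colors but with
`C s ≠ C t`. -/
theorem stmt4 {S : Type} [Fintype S] {I : Type} [Fintype I]
    (P : I → Type) [∀ i, Fintype (P i)] (ρ : ∀ i, S → P i)
    (N M p q : ℕ) (hN : Fintype.card S = N)
    (hM : ∑ i, Fintype.card (P i) = M)
    (hq : 2 ≤ q) (hp : p = Nat.clog 2 q)
    (hbig : p * M + q ^ Fintype.card I < N) :
    ∃ C : S → Bool, ∀ D : ∀ i, P i → Fin q,
      ∃ s t : S, (∀ i, D i (ρ i s) = D i (ρ i t)) ∧ C s ≠ C t := by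
  classical
  set Φ : (∀ i, P i → Fin q) × ((∀ _ : I, Fin q) → Bool) → (S → Bool) :=
    fun x s => x.2 (fun i => x.1 i (ρ i s)) with hΦ
  have hq2 : q ≤ 2 ^ p := by
    rw [hp]; exact Nat.le_pow_clog (by norm_num) q
  have h1 : Fintype.card (∀ i, P i → Fin q) = q ^ M := by
    simp [Fintype.card_pi, Fintype.card_fun, ← hM,
      Finset.prod_pow_eq_pow_sum]
  have hcard : Fintype.card ((∀ i, P i → Fin q) × ((∀ _ : I, Fin q) → Bool))
      < Fintype.card (S → Bool) := by
    rw [Fintype.card_prod, h1, Fintype.card_fun, Fintype.card_fun,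
      Fintype.card_pi, Fintype.card_fin, Fintype.card_bool,
      Finset.prod_const, Finset.card_univ, hN]
    calc q ^ M * 2 ^ (q ^ Fintype.card I)
        ≤ (2 ^ p) ^ M * 2 ^ (q ^ Fintype.card I) := by
          exact Nat.mul_le_mul_right _ (Nat.pow_le_pow_left hq2 M)
      _ = 2 ^ (p * M + q ^ Fintype.card I) := by
          rw [← pow_mul, ← pow_add]
      _ < 2 ^ N := Nat.pow_lt_pow_right (by norm_num) hbig
  have hns : ¬ Function.Surjective Φ := fun h =>
    absurd (Fintype.card_le_of_surjective Φ h) (not_le.2 hcard)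
  rw [Function.Surjective] at hns
  push_neg at hns
  obtain ⟨C, hC⟩ := hns
  refine ⟨C, fun D => ?_⟩
  by_contra hcon
  push_neg at hcon
  have hcon' : ∀ s t : S, (∀ i, D i (ρ i s) = D i (ρ i t)) → C s = C t := hcon
  apply hC ⟨D, fun v => if h : ∃ s : S, (fun i => D i (ρ i s)) = v
      then C h.choose else false⟩
  funext s
  have hex : ∃ t : S, (fun i => D i (ρ i t)) = (fun i => D i (ρ i s)) := ⟨s, rfl⟩
  simp only [hΦ, dif_pos hex]
  exact hcon' hex.choose s (fun i => congrFun hex.choose_spec i)
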